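/- arXiv:1411.6279 — 11 statements merged into one kernel-verified Lean document; each statement's English description precedes it below -/
import Mathlib

section
/- For each non-negative integer n, a world w in a Kripke model with a temporal 'yesterday' relation satisfies the formula D_n = ⟨Y⟩^n [Y]⊥ ∧ [Y]^{n+1}⊥ if and only if the depth of w equals n, where depth(w) is the maximum length of a backward chain of yesterday-arrows ending at w. -/
structure KModel (Agt Prp W : Type) where
  rel : Agt → W → W → Prop
  yest : W → W → Prop
  val : Prp → W → Prop

structure AModel (Agt W E : Type) where
  rel : Agt → E → E → Prop
  yest : E → E → Prop
  pre : E → W → Prop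

def hasChain {α : Type} (y : α → α → Prop) : ℕ → α → Prop
  | 0, _ => True
  | n + 1, w => ∃ v, y v w ∧ hasChain y n v

noncomputable def depth {α : Type} (y : α → α → Prop) (w : α) : ℕ∞ :=
  sSup ((fun n : ℕ => (n : ℕ∞)) '' {n | hasChain y n w})

def DepthDef {α : Type} (y : α → α → Prop) : Prop := ∀ x, depth y x ≠ ⊤

def pastState {α : Type} (y : α → α → Prop) (s : α) : Prop := ¬ ∃ s', y s' s

def KnowPast {Agt α : Type} (r : Agt → α → α → Prop) (y : α → α → Prop) : Prop :=
  ∀ a w' w v, y w' w → r a w v → ∃ v', y v' v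

def KnowInit {Agt α : Type} (r : Agt → α → α → Prop) (y : α → α → Prop) : Prop :=
  ∀ a w v, r a w v → pastState y w → pastState y v

def UniqPast {α : Type} (y : α → α → Prop) : Prop :=
  ∀ w' w'' w, y w' w → y w'' w → w' = w''

def PerfRecall {Agt α : Type} (r : Agt → α → α → Prop) (y : α → α → Prop) : Prop :=
  ∀ a w' w v, y w' w → r a w v → ∃ v', r a w' v' ∧ y v' v

def Sync {Agt α : Type} (r : Agt → α → α → Prop) (y : α → α → Prop) : Prop :=
  DepthDef y ∧ ∀ a x x', r a x x' → depth y x = depth y x'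

def EpiPast {Agt W E : Type} (U : AModel Agt W E) (s : E) : Prop :=
  pastState U.yest s ∧ (∀ w, U.pre s w) ∧
    ∀ a t, (U.rel a s t ↔ t = s) ∧ (U.rel a t s ↔ t = s)

def HistPres {Agt W E : Type} (U : AModel Agt W E) : Prop :=
  (∀ s' s, U.yest s' s → ∀ w, U.pre s w → U.pre s' w) ∧
    ∀ s, pastState U.yest s → EpiPast U s

def pRel {Agt Prp W E : Type} (M : KModel Agt Prp W) (U : AModel Agt W E)
    (a : Agt) (p q : W × E) : Prop :=
  U.pre p.2 p.1 ∧ U.pre q.2 q.1 ∧ M.rel a p.1 q.1 ∧ U.rel a p.2 q.2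

def pYest {Agt Prp W E : Type} (M : KModel Agt Prp W) (U : AModel Agt W E)
    (p q : W × E) : Prop :=
  U.pre p.2 p.1 ∧ U.pre q.2 q.1 ∧
    ((M.yest p.1 q.1 ∧ p.2 = q.2 ∧ pastState U.yest q.2) ∨ (p.1 = q.1 ∧ U.yest p.2 q.2))

def prodM {Agt Prp W E : Type} (M : KModel Agt Prp W) (U : AModel Agt W E) :
    KModel Agt Prp (W × E) :=
  ⟨pRel M U, pYest M U, fun p q => M.val p q.1⟩

inductive Fm (Agt Prp : Type) : Type
  | bot : Fm Agt Prp
  | atom : Prp → Fm Agt Prp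
  | neg : Fm Agt Prp → Fm Agt Prp
  | conj : Fm Agt Prp → Fm Agt Prp → Fm Agt Prp
  | box : Agt → Fm Agt Prp → Fm Agt Prp
  | yest : Fm Agt Prp → Fm Agt Prp

def sat {Agt Prp W : Type} (M : KModel Agt Prp W) (w : W) : Fm Agt Prp → Prop
  | .bot => False
  | .atom p => M.val p w
  | .neg φ => ¬ sat M w φ
  | .conj φ ψ => sat M w φ ∧ sat M w ψ
  | .box a φ => ∀ v, M.rel a w v → sat M v φ
  | .yest φ => ∀ v, M.yest v w → sat M v φ

def Fm.diaY {Agt Prp : Type} (φ : Fm Agt Prp) : Fm Agt Prp := .neg (.yest (.neg φ))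

def IsBisim {Agt Prp W W' : Type} (M : KModel Agt Prp W) (M' : KModel Agt Prp W')
    (B : W → W' → Prop) : Prop :=
  (∃ w w', B w w') ∧
  ∀ w w', B w w' →
    (∀ p, M.val p w ↔ M'.val p w') ∧
    (∀ a v, M.rel a w v → ∃ v', M'.rel a w' v' ∧ B v v') ∧
    (∀ a v', M'.rel a w' v' → ∃ v, M.rel a w v ∧ B v v') ∧
    (∀ v, M.yest v w → ∃ v', M'.yest v' w' ∧ B v v') ∧
    (∀ v', M'.yest v' w' → ∃ v, M.yest v w ∧ B v v')
def Dfm {Agt Prp : Type} (n : ℕ) : Fm Agt Prp :=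
  .conj (Fm.diaY^[n] (.yest .bot)) (Fm.yest^[n + 1] .bot)

def pchain {α : Type} (y : α → α → Prop) : ℕ → α → Prop
  | 0, w => pastState y w
  | n + 1, w => ∃ v, y v w ∧ pchain y n v

lemma hasChain_succ_mono {α : Type} (y : α → α → Prop) :
    ∀ n w, hasChain y (n + 1) w → hasChain y n w := by
  intro n
  induction n with
  | zero => intro w _; trivial
  | succ m ih =>
    rintro w ⟨v, hv, hc⟩
    exact ⟨v, hv, ih v hc⟩

lemma hasChain_anti {α : Type} (y : α → α → Prop) :
    ∀ m k w, m ≤ k → hasChain y k w → hasChain y m w := by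
  intro m k w h
  induction h with
  | refl => exact id
  | step h ih => intro hk; exact ih (hasChain_succ_mono y _ w hk)

lemma pchain_hasChain {α : Type} (y : α → α → Prop) :
    ∀ n w, pchain y n w → hasChain y n w := by
  intro n
  induction n with
  | zero => intro w _; trivial
  | succ m ih => rintro w ⟨v, hv, hc⟩; exact ⟨v, hv, ih v hc⟩

lemma hasChain_pchain {α : Type} (y : α → α → Prop) :
    ∀ n w, hasChain y n w → ¬ hasChain y (n + 1) w → pchain y n w := by
  intro n
  induction n with
  | zero =>
    intro w _ h1
    rintro ⟨v, hv⟩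
    exact h1 ⟨v, hv, trivial⟩
  | succ m ih =>
    rintro w ⟨v, hv, hc⟩ h1
    exact ⟨v, hv, ih v hc (fun h => h1 ⟨v, hv, h⟩)⟩

lemma sat_yest_iter {Agt Prp W : Type} (M : KModel Agt Prp W) :
    ∀ n w, sat M w (Fm.yest^[n] (.bot : Fm Agt Prp)) ↔ ¬ hasChain M.yest n w := by
  intro n
  induction n with
  | zero =>
    intro w
    simp [sat, hasChain]
  | succ m ih =>
    intro w
    rw [Function.iterate_succ_apply']
    constructor
    · rintro h ⟨v, hv, hc⟩
      exact (ih v).mp (h v hv) hc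
    · intro h v hv
      exact (ih v).mpr fun hc => h ⟨v, hv, hc⟩

lemma sat_diaY_iter {Agt Prp W : Type} (M : KModel Agt Prp W) :
    ∀ n w, sat M w (Fm.diaY^[n] (.yest (.bot : Fm Agt Prp))) ↔ pchain M.yest n w := by
  intro n
  induction n with
  | zero =>
    intro w
    constructor
    · intro h ⟨v, hv⟩; exact h v hv
    · intro h v hv; exact h ⟨v, hv⟩
  | succ m ih =>
    intro w
    rw [Function.iterate_succ_apply']
    constructor
    · intro h
      by_contra hc
      apply h
      intro v hv
      intro hs
      exact hc ⟨v, hv, (ih v).mp hs⟩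
    · rintro ⟨v, hv, hc⟩ h
      exact h v hv ((ih v).mpr hc)

lemma depth_eq_iff {α : Type} (y : α → α → Prop) (w : α) (n : ℕ) :
    depth y w = (n : ℕ∞) ↔ hasChain y n w ∧ ¬ hasChain y (n + 1) w := by
  constructor
  · intro h
    constructor
    · by_contra hc
      have hub : ∀ x ∈ (fun m : ℕ => (m : ℕ∞)) '' {m | hasChain y m w}, x ≤ ((n : ℕ∞) - 1) := by
        rintro x ⟨m, hm, rfl⟩
        have hmn : m < n := by
          by_contra hmn
          push_neg at hmn
          exact hc (hasChain_anti y n m w hmn hm)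
        have hn1 : 1 ≤ n := Nat.one_le_iff_ne_zero.mpr (by omega)
        have : m ≤ n - 1 := by omega
        calc (m : ℕ∞) ≤ ((n - 1 : ℕ) : ℕ∞) := by exact_mod_cast this
          _ = (n : ℕ∞) - 1 := by
            simp [ENat.coe_sub]
      have hle : depth y w ≤ (n : ℕ∞) - 1 := sSup_le hub
      rw [h] at hle
      have hn1 : 1 ≤ n := by
        by_contra h0
        have : n = 0 := by omega
        subst this
        exact (hc trivial).elim
      have : (n : ℕ∞) - 1 < (n : ℕ∞) := by
        rw [show ((n : ℕ∞) - 1) = ((n - 1 : ℕ) : ℕ∞) by simp [ENat.coe_sub]]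
        exact_mod_cast Nat.sub_lt (by omega) one_pos
      exact absurd hle (not_le.mpr this)
    · intro hc
      have : ((n + 1 : ℕ) : ℕ∞) ≤ depth y w :=
        le_sSup ⟨n + 1, hc, rfl⟩
      rw [h] at this
      exact absurd this (by exact_mod_cast Nat.not_succ_le_self n)
  · rintro ⟨h1, h2⟩
    apply le_antisymm
    · apply sSup_le
      rintro x ⟨m, hm, rfl⟩
      have hmn : m ≤ n := by
        by_contra hmn
        push_neg at hmn
        exact h2 (hasChain_anti y (n + 1) m w hmn hm)
      show (m : ℕ∞) ≤ (n : ℕ∞)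
      exact_mod_cast hmn
    · exact le_sSup ⟨n, h1, rfl⟩

theorem stmt0 {Agt Prp W : Type} (M : KModel Agt Prp W) (w : W) (n : ℕ) :
    sat M w (Dfm n) ↔ depth M.yest w = (n : ℕ∞) := by
  rw [depth_eq_iff]
  show sat M w (Fm.diaY^[n] (.yest .bot)) ∧ sat M w (Fm.yest^[n+1] .bot) ↔ _
  rw [sat_diaY_iter, sat_yest_iter]
  constructor
  · rintro ⟨h1, h2⟩
    exact ⟨pchain_hasChain _ _ _ h1, h2⟩
  · rintro ⟨h1, h2⟩
    exact ⟨hasChain_pchain _ _ _ h1 h2, h2⟩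
end

section
/- For any Kripke model M and action model U, every world (w,s) of the update product M[U] satisfies depth(w,s) ≤ depth(w) + depth(s), where depths are computed in M[U], M, and U respectively. Consequently, if M and U are both depth-defined (all depths finite), then M[U] is depth-defined. -/
lemma chain_split {Agt Prp W E : Type} (M : KModel Agt Prp W) (U : AModel Agt W E) :
    ∀ n (p : W × E), hasChain (pYest M U) n p →
      ∃ k l, k + l = n ∧ hasChain M.yest k p.1 ∧ hasChain U.yest l p.2 := by
  intro n
  induction n with
  | zero => intro p _; exact ⟨0, 0, rfl, trivial, trivial⟩
  | succ n ih =>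
    rintro p ⟨v, ⟨_, _, h⟩, hc⟩
    obtain ⟨k, l, hkl, hk, hl⟩ := ih v hc
    rcases h with ⟨hy, he, -⟩ | ⟨he, hy⟩
    · exact ⟨k + 1, l, by omega, ⟨v.1, hy, hk⟩, he ▸ hl⟩
    · exact ⟨k, l + 1, by omega, he ▸ hk, ⟨v.2, hy, hl⟩⟩

lemma hasChain_le_depth {α : Type} (y : α → α → Prop) {n : ℕ} {w : α}
    (h : hasChain y n w) : (n : ℕ∞) ≤ depth y w :=
  le_sSup ⟨n, h, rfl⟩

theorem stmt6 {Agt Prp W E : Type} (M : KModel Agt Prp W) (U : AModel Agt W E) :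
    (∀ p : W × E, U.pre p.2 p.1 →
        depth (pYest M U) p ≤ depth M.yest p.1 + depth U.yest p.2) ∧
      (DepthDef M.yest → DepthDef U.yest →
        ∀ p : W × E, U.pre p.2 p.1 → depth (pYest M U) p ≠ ⊤) := by
  have main : ∀ p : W × E, U.pre p.2 p.1 →
      depth (pYest M U) p ≤ depth M.yest p.1 + depth U.yest p.2 := by
    intro p _
    apply sSup_le
    rintro x ⟨n, hn, rfl⟩
    obtain ⟨k, l, hkl, hk, hl⟩ := chain_split M U n p hn
    calc (n : ℕ∞) = (k : ℕ∞) + (l : ℕ∞) := by exact_mod_cast hkl.symm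
    _ ≤ _ := add_le_add (hasChain_le_depth _ hk) (hasChain_le_depth _ hl)
  refine ⟨main, fun hM hU p hp => ?_⟩
  exact ne_top_of_le_ne_top (WithTop.add_ne_top.2 ⟨hM p.1, hU p.2⟩) (main p hp)
end

section
/- If Kripke model M and action model U both satisfy knowledge of the past, and U is history preserving, then the update product M[U] satisfies knowledge of the past: whenever (w',s') ⇝ (w,s) →_a (v,t) in M[U], there exists (v',t') with (v',t') ⇝^{M[U]} (v,t). -/
theorem stmt7 {Agt Prp W E : Type} (M : KModel Agt Prp W) (U : AModel Agt W E)
    (hM : KnowPast M.rel M.yest) (hU : KnowPast U.rel U.yest) (hH : HistPres U) :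
    KnowPast (pRel M U) (pYest M U) := by
  rintro a ⟨w', s'⟩ ⟨w, s⟩ ⟨v, t⟩ ⟨hp1, hp2, hy⟩ ⟨_, hpt, hr, hur⟩
  rcases hy with ⟨hMy, hse, hps⟩ | ⟨hwe, hUy⟩
  · obtain ⟨v', hv'⟩ := hM a w' w v hMy hr
    have hep := hH.2 _ hps
    have hts : t = s := (hep.2.2 a t).1.mp (hse ▸ hur)
    exact ⟨(v', t), hts ▸ hep.2.1 v', hpt, Or.inl ⟨hv', rfl, hts ▸ hps⟩⟩
  · obtain ⟨t', ht'⟩ := hU a s' s t hUy hur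
    exact ⟨(v, t'), hH.1 t' t ht' v hpt, hpt, Or.inr ⟨rfl, ht'⟩⟩
end

section
/- If Kripke model M satisfies knowledge of the initial time and action model U is history preserving, then the update product M[U] satisfies knowledge of the initial time: if (w,s) →_a (v,t) in M[U] and (w,s) has no ⇝^{M[U]}-predecessor, then (v,t) has no ⇝^{M[U]}-predecessor. -/
theorem stmt8 {Agt Prp W E : Type} (M : KModel Agt Prp W) (U : AModel Agt W E)
    (hM : KnowInit M.rel M.yest) (hH : HistPres U) :
    KnowInit (pRel M U) (pYest M U) := by
  rintro a ⟨w, s⟩ ⟨v, t⟩ ⟨hpw, hpv, hrw, hrs⟩ hpast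
  have hs : pastState U.yest s := by
    rintro ⟨s', hs'⟩
    exact hpast ⟨(w, s'), hH.1 s' s hs' w hpw, hpw, Or.inr ⟨rfl, hs'⟩⟩
  obtain ⟨hsp, hpre, hrel⟩ := hH.2 s hs
  have hts : t = s := (hrel a t).1.mp hrs
  subst hts
  have hw : pastState M.yest w := by
    rintro ⟨w', hw'⟩
    exact hpast ⟨(w', t), hpre w', hpw, Or.inl ⟨hw', rfl, hs⟩⟩
  have hv : pastState M.yest v := hM a w v hrw hw
  rintro ⟨⟨u, r⟩, _, _, (⟨hy, _, _⟩ | ⟨_, hy⟩)⟩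
  · exact hv ⟨u, hy⟩
  · exact hs ⟨r, hy⟩
end

section
/- If Kripke model M and action model U both satisfy uniqueness of the past, then so does the update product M[U]: if (v₁,t₁) ⇝^{M[U]} (w,s) and (v₂,t₂) ⇝^{M[U]} (w,s), then (v₁,t₁) = (v₂,t₂). -/
theorem stmt9 {Agt Prp W E : Type} (M : KModel Agt Prp W) (U : AModel Agt W E)
    (hM : UniqPast M.yest) (hU : UniqPast U.yest) :
    UniqPast (pYest M U) := by
  rintro ⟨v₁, t₁⟩ ⟨v₂, t₂⟩ ⟨w, s⟩ ⟨_, _, h₁⟩ ⟨_, _, h₂⟩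
  rcases h₁ with ⟨hy₁, ht₁, hp₁⟩ | ⟨hv₁, hy₁⟩ <;>
    rcases h₂ with ⟨hy₂, ht₂, hp₂⟩ | ⟨hv₂, hy₂⟩
  · exact Prod.ext (hM _ _ _ hy₁ hy₂) (ht₁.trans ht₂.symm)
  · exact absurd ⟨t₂, hy₂⟩ hp₁
  · exact absurd ⟨t₁, hy₁⟩ hp₂
  · exact Prod.ext (hv₁.trans hv₂.symm) (hU _ _ _ hy₁ hy₂)
end

section
/- If Kripke model M and action model U both satisfy perfect recall and U is history preserving, then the update product M[U] satisfies perfect recall: whenever (w',s') ⇝ (w,s) →_a (v,t) in M[U], there exists (v',t') in M[U] with (w',s') →_a (v',t') ⇝ (v,t). -/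
theorem stmt10 {Agt Prp W E : Type} (M : KModel Agt Prp W) (U : AModel Agt W E)
    (hM : PerfRecall M.rel M.yest) (hU : PerfRecall U.rel U.yest) (hH : HistPres U) :
    PerfRecall (pRel M U) (pYest M U) := by
  rintro a p' p q ⟨hp', hp, hY⟩ ⟨_, hq, hr, hu⟩
  rcases hY with ⟨hy, he, hpast⟩ | ⟨he, hy⟩
  · obtain ⟨v', hrv', hyv'⟩ := hM a p'.1 p.1 q.1 hy hr
    have hEpi := hH.2 p.2 hpast
    have hq2 : q.2 = p.2 := ((hEpi.2.2 a q.2).1).mp hu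
    refine ⟨(v', p.2), ⟨hp', hEpi.2.1 v', hrv', ?_⟩, hEpi.2.1 v', hq, Or.inl ⟨hyv', hq2.symm, hq2 ▸ hpast⟩⟩
    rw [he]
    exact ((hEpi.2.2 a p.2).1).mpr rfl
  · obtain ⟨t', hrt', hyt'⟩ := hU a p'.2 p.2 q.2 hy hu
    have hpre : U.pre t' q.1 := hH.1 t' q.2 hyt' q.1 hq
    exact ⟨(q.1, t'), ⟨hp', hpre, he ▸ hr, hrt'⟩, hpre, hq, Or.inr ⟨rfl, hyt'⟩⟩
end

section
/- If Kripke model M and action model U are both synchronous and U is history preserving, then every world (v,t) of M[U] satisfies depth(v,t) = depth(v) + depth(t), and M[U] is synchronous: M[U] is depth-defined and (w,s) →_a (w',s') implies depth(w,s) = depth(w',s'). -/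
/-!
The depth of a world is its potential for a backward chain: `depth` is the least function `φ`
with `φ v + 1 ≤ φ w` along every edge `v ⇝ w`. In `M[U]` the sum `depth v + depth t` is such a
function, which bounds the depth of `(v, t)` from above. Conversely, a longest past of `(v, t)`
first runs back through `U` along a maximal chain from `t` (preconditions persist by history
preservation) and, once a past state of `U` is reached, follows any chain of `M` back from `v`,
since past states of `U` are executable everywhere.
-/

section Depth

variable {α β : Type} {y : α → α → Prop}

lemma le_depth_of_hasChain {n : ℕ} {w : α} (h : hasChain y n w) : (n : ℕ∞) ≤ depth y w :=
  le_sSup ⟨n, h, rfl⟩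

lemma depth_le_iff {w : α} {c : ℕ∞} :
    depth y w ≤ c ↔ ∀ n, hasChain y n w → (n : ℕ∞) ≤ c := by
  simp [depth, sSup_le_iff]

lemma depth_add_one_le {v w : α} (h : y v w) : depth y v + 1 ≤ depth y w := by
  rw [depth, ENat.sSup_add (Set.Nonempty.image _ (s := {n | hasChain y n v}) ⟨0, trivial⟩)]
  refine iSup₂_le ?_
  rintro _ ⟨n, hn, rfl⟩
  exact_mod_cast le_depth_of_hasChain (n := n + 1) ⟨v, h, hn⟩

lemma pastState_of_depth_eq_zero {w : α} (h : depth y w = 0) : pastState y w := by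
  rintro ⟨v, hv⟩
  simpa [h] using depth_add_one_le hv

lemma exists_depth_eq_of_depth_eq_add_one {w : α} {k : ℕ} (h : depth y w = k + 1) :
    ∃ v, y v w ∧ depth y v = k := by
  have hlt : (k : ℕ∞) < depth y w := h ▸ ENat.natCast_lt_succ
  obtain ⟨_, ⟨n, hn, rfl⟩, hkn⟩ := lt_sSup_iff.1 hlt
  have hkn : k < n := Nat.cast_lt.1 hkn
  obtain ⟨m, rfl⟩ : ∃ m, n = m + 1 := Nat.exists_eq_add_one.2 (by omega)
  obtain ⟨v, hvw, hv⟩ := hn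
  refine ⟨v, hvw, le_antisymm ?_ ?_⟩
  · exact (ENat.add_le_add_iff_right ENat.one_ne_top).1 (h ▸ depth_add_one_le hvw)
  · exact le_trans (by exact_mod_cast Nat.lt_succ_iff.1 hkn) (le_depth_of_hasChain hv)

lemma depth_le_of_add_one_le (φ : α → ℕ∞) (hφ : ∀ v w, y v w → φ v + 1 ≤ φ w) (w : α) :
    depth y w ≤ φ w := by
  refine depth_le_iff.2 fun n ↦ ?_
  induction n generalizing w with
  | zero => simp
  | succ n ih =>
    rintro ⟨v, hvw, hv⟩
    calc ((n + 1 : ℕ) : ℕ∞) = n + 1 := Nat.cast_succ n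
      _ ≤ φ v + 1 := by gcongr; exact ih v hv
      _ ≤ φ w := hφ v w hvw

lemma depth_le_depth_of_map {y' : β → β → Prop} (f : α → β)
    (hf : ∀ v w, y v w → y' (f v) (f w)) (w : α) : depth y w ≤ depth y' (f w) := by
  refine depth_le_iff.2 fun n hn ↦ le_depth_of_hasChain ?_
  induction n generalizing w with
  | zero => trivial
  | succ n ih =>
    obtain ⟨v, hvw, hv⟩ := hn
    exact ⟨f v, hf v w hvw, ih v hv⟩

end Depth

section Product

variable {Agt Prp W E : Type} (M : KModel Agt Prp W) (U : AModel Agt W E)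

lemma depth_pYest_le (p : W × E) :
    depth (pYest M U) p ≤ depth M.yest p.1 + depth U.yest p.2 := by
  refine depth_le_of_add_one_le (fun q ↦ depth M.yest q.1 + depth U.yest q.2) ?_ p
  rintro ⟨v', t'⟩ ⟨v, t⟩ ⟨-, -, ⟨hv, rfl, -⟩ | ⟨rfl, ht⟩⟩
  · calc depth M.yest v' + depth U.yest t' + 1 = depth M.yest v' + 1 + depth U.yest t' :=
          add_right_comm _ _ _
      _ ≤ depth M.yest v + depth U.yest t' := by gcongr; exact depth_add_one_le hv
  · calc depth M.yest v' + depth U.yest t' + 1 = depth M.yest v' + (depth U.yest t' + 1) :=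
          add_assoc _ _ _
      _ ≤ depth M.yest v' + depth U.yest t := by gcongr; exact depth_add_one_le ht

lemma depth_le_depth_pYest_of_pastState {t : E} (ht : pastState U.yest t)
    (hpre : ∀ w, U.pre t w) (v : W) : depth M.yest v ≤ depth (pYest M U) (v, t) :=
  depth_le_depth_of_map (fun w ↦ (w, t))
    (fun v' v hv ↦ ⟨hpre v', hpre v, .inl ⟨hv, rfl, ht⟩⟩) v

lemma add_le_depth_pYest (hH : HistPres U) {v : W} {t : E} (ht : depth U.yest t ≠ ⊤)
    (hpre : U.pre t v) : depth M.yest v + depth U.yest t ≤ depth (pYest M U) (v, t) := by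
  obtain ⟨k, hk⟩ := ENat.ne_top_iff_exists.1 ht
  clear ht
  induction k generalizing t with
  | zero =>
    have hpast := pastState_of_depth_eq_zero (by rw [← hk, Nat.cast_zero])
    rw [← hk, Nat.cast_zero, add_zero]
    exact depth_le_depth_pYest_of_pastState M U hpast (hH.2 t hpast).2.1 v
  | succ k ih =>
    obtain ⟨t', ht't, hk'⟩ :=
      exists_depth_eq_of_depth_eq_add_one (k := k) (by rw [← hk, Nat.cast_succ])
    have hpre' := hH.1 t' t ht't v hpre
    calc depth M.yest v + depth U.yest t = depth M.yest v + depth U.yest t' + 1 := by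
          rw [← hk, hk', Nat.cast_succ, add_assoc]
      _ ≤ depth (pYest M U) (v, t') + 1 := by gcongr; exact ih hpre' hk'.symm
      _ ≤ depth (pYest M U) (v, t) := depth_add_one_le ⟨hpre', hpre, .inr ⟨rfl, ht't⟩⟩

lemma depth_pYest_eq (hU : DepthDef U.yest) (hH : HistPres U) {p : W × E}
    (hpre : U.pre p.2 p.1) : depth (pYest M U) p = depth M.yest p.1 + depth U.yest p.2 :=
  le_antisymm (depth_pYest_le M U p) (add_le_depth_pYest M U hH (hU p.2) hpre)

end Product

theorem stmt11 {Agt Prp W E : Type} (M : KModel Agt Prp W) (U : AModel Agt W E)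
    (hM : Sync M.rel M.yest) (hU : Sync U.rel U.yest) (hH : HistPres U) :
    (∀ p : W × E, U.pre p.2 p.1 →
        depth (pYest M U) p = depth M.yest p.1 + depth U.yest p.2) ∧
      (∀ p : W × E, U.pre p.2 p.1 → depth (pYest M U) p ≠ ⊤) ∧
      (∀ (a : Agt) (p q : W × E), pRel M U a p q →
        depth (pYest M U) p = depth (pYest M U) q) := by
  have hdepth := fun p ↦ depth_pYest_eq M U hU.1 hH (p := p)
  refine ⟨hdepth, fun p hp ↦ ?_, ?_⟩
  · rw [hdepth p hp]
    exact WithTop.add_ne_top.2 ⟨hM.1 p.1, hU.1 p.2⟩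
  · rintro a p q ⟨hp, hq, hMpq, hUpq⟩
    rw [hdepth p hp, hdepth q hq, hM.2 a _ _ hMpq, hU.2 a _ _ hUpq]
end

section
/- If s is an epistemic past state of action model U and M,w ⊨ pre(s), then the map f : W^M → W^{M[U]} defined by f(v) = (v,s) (restricted to worlds where it lands in M[U]) yields a bisimulation relating (M,w) and (M[U],(w,s)); consequently (M,w) and (M[U],(w,s)) satisfy the same L_SETL formulas. -/
theorem stmt13 {Agt Prp W E : Type} (M : KModel Agt Prp W) (U : AModel Agt W E)
    (s : E) (hs : EpiPast U s) (w : W) (hw : U.pre s w) :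
    IsBisim M (prodM M U) (fun v p => p = (v, s)) ∧
      ∀ φ : Fm Agt Prp, sat M w φ ↔ sat (prodM M U) (w, s) φ := by
  obtain ⟨hpast, hpre, hrel⟩ := hs
  have hloop : ∀ a, U.rel a s s := fun a => ((hrel a s).1).mpr rfl
  constructor
  · refine ⟨⟨w, (w, s), rfl⟩, ?_⟩
    rintro v p rfl
    refine ⟨fun _ => Iff.rfl, ?_, ?_, ?_, ?_⟩
    · intro a u h
      exact ⟨(u, s), ⟨hpre v, hpre u, h, hloop a⟩, rfl⟩
    · rintro a ⟨u, t⟩ ⟨_, _, hr, hur⟩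
      have : t = s := ((hrel a t).1).mp hur
      subst this
      exact ⟨u, hr, rfl⟩
    · intro u h
      exact ⟨(u, s), ⟨hpre u, hpre v, Or.inl ⟨h, rfl, hpast⟩⟩, rfl⟩
    · rintro ⟨u, t⟩ ⟨_, _, (⟨hy, ht, _⟩ | ⟨_, hy⟩)⟩
      · subst ht; exact ⟨u, hy, rfl⟩
      · exact absurd ⟨t, hy⟩ hpast
  · have main : ∀ (φ : Fm Agt Prp) (v : W), sat M v φ ↔ sat (prodM M U) (v, s) φ := by
      intro φ
      induction φ with
      | bot => intro v; exact Iff.rfl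
      | atom p => intro v; exact Iff.rfl
      | neg φ ih => intro v; exact not_congr (ih v)
      | conj φ ψ ih1 ih2 => intro v; exact and_congr (ih1 v) (ih2 v)
      | box a φ ih =>
        intro v
        constructor
        · rintro h ⟨u, t⟩ ⟨_, _, hr, hur⟩
          have : t = s := ((hrel a t).1).mp hur
          subst this
          exact (ih u).mp (h u hr)
        · intro h u hr
          exact (ih u).mpr (h (u, s) ⟨hpre v, hpre u, hr, hloop a⟩)
      | yest φ ih =>
        intro v
        constructor
        · rintro h ⟨u, t⟩ ⟨_, _, (⟨hy, ht, _⟩ | ⟨_, hy⟩)⟩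
          · subst ht; exact (ih u).mp (h u hy)
          · exact absurd ⟨t, hy⟩ hpast
        · intro h u hy
          exact (ih u).mpr (h (u, s) ⟨hpre u, hpre v, Or.inl ⟨hy, rfl, hpast⟩⟩)
    exact fun φ => main φ w
end

section
/- For every Kripke model M with yesterday and every atemporal action model U, the YDEL update M ⊕ U is isomorphic (indeed equal, as structures on the same carrier after identifying ♭) to the DETL update product M[U♯], where U♯ is obtained from U by adding a fresh event ♭ with precondition ⊤, a reflexive epistemic loop ♭ →_a ♭ for every agent, and temporal arrows ♭ ⇝ s to every original event s of U. -/
def oplus {Agt Prp W E : Type} (M : KModel Agt Prp W) (U : AModel Agt W E) :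
    KModel Agt Prp (W × Option E) where
  rel a p q :=
    match p.2, q.2 with
    | some t, some t' => M.rel a p.1 q.1 ∧ U.rel a t t' ∧ U.pre t p.1 ∧ U.pre t' q.1
    | none, none => M.rel a p.1 q.1
    | _, _ => False
  yest p q :=
    match p.2, q.2 with
    | none, some t' => p.1 = q.1 ∧ U.pre t' q.1
    | none, none => M.yest p.1 q.1
    | _, _ => False
  val p q := M.val p q.1

def sharp {Agt W E : Type} (U : AModel Agt W E) : AModel Agt W (Option E) where
  rel a s s' := (∃ t t', s = some t ∧ s' = some t' ∧ U.rel a t t') ∨ (s = none ∧ s' = none)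
  yest s s' := s = none ∧ s' ≠ none
  pre s w := match s with | none => True | some t => U.pre t w

theorem stmt16 {Agt Prp W E : Type} (M : KModel Agt Prp W) (U : AModel Agt W E)
    (hat : ∀ s s', ¬ U.yest s s') :
    (∀ p : W × Option E,
        (sharp U).pre p.2 p.1 ↔ (p.2 = none ∨ ∃ e, p.2 = some e ∧ U.pre e p.1)) ∧
      (∀ (a : Agt) (p q : W × Option E),
        (oplus M U).rel a p q ↔ (prodM M (sharp U)).rel a p q) ∧
      (∀ p q : W × Option E, (oplus M U).yest p q ↔ (prodM M (sharp U)).yest p q) ∧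
      (∀ (pl : Prp) (q : W × Option E),
        (oplus M U).val pl q ↔ (prodM M (sharp U)).val pl q) := by
  refine ⟨?_, ?_, ?_, fun pl q => Iff.rfl⟩
  · rintro ⟨w, _ | e⟩
    · simp [sharp]
    · simp [sharp]
  · rintro a ⟨w, _ | t⟩ ⟨v, _ | t'⟩ <;>
      simp [oplus, prodM, pRel, sharp] <;> tauto
  · rintro ⟨w, _ | t⟩ ⟨v, _ | t'⟩ <;>
      simp [oplus, prodM, pYest, sharp, pastState] <;> tauto
end

section
/- For any atemporal action model U, the translated action model U♯ (obtained by adding an epistemic past state ♭ with precondition ⊤ and arrows ♭ ⇝ s to each original event s) satisfies depth-definedness, knowledge of the past, knowledge of the initial time, uniqueness of the past, perfect recall, and history preservation. -/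
theorem stmt17 {Agt W E : Type} (U : AModel Agt W E) (hat : ∀ s s', ¬ U.yest s s') :
    DepthDef (sharp U).yest ∧ KnowPast (sharp U).rel (sharp U).yest ∧
      KnowInit (sharp U).rel (sharp U).yest ∧ UniqPast (sharp U).yest ∧
      PerfRecall (sharp U).rel (sharp U).yest ∧ HistPres (sharp U) := by
  have hchain : ∀ n (x : Option E), hasChain (sharp U).yest n x → n ≤ 1 := by
    intro n
    match n with
    | 0 => intro _ _; omega
    | 1 => intro _ _; omega
    | n + 2 =>
      rintro x ⟨v, ⟨hv, -⟩, u, ⟨hu, hu'⟩, -⟩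
      subst hv; exact absurd hu' (by simp [hu])
  refine ⟨?_, ?_, ?_, ?_, ?_, ?_⟩
  · intro x hx
    have : depth (sharp U).yest x ≤ (1 : ℕ∞) := by
      apply sSup_le
      rintro m ⟨n, hn, rfl⟩
      simp only []; exact_mod_cast hchain n x hn
    rw [hx] at this
    exact absurd this (by simp)
  · rintro a w' w v ⟨rfl, hw⟩ hr
    rcases hr with ⟨t, t', rfl, rfl, -⟩ | ⟨rfl, -⟩
    · exact ⟨none, rfl, by simp⟩
    · exact absurd rfl hw
  · rintro a w v hr hp
    have hw : w = none := by
      cases w with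
      | none => rfl
      | some t => exact absurd ⟨none, rfl, by simp⟩ hp
    subst hw
    rcases hr with ⟨t, t', h, -⟩ | ⟨-, rfl⟩
    · simp at h
    · rintro ⟨s', rfl, h⟩; exact h rfl
  · rintro w' w'' w ⟨rfl, -⟩ ⟨rfl, -⟩; rfl
  · rintro a w' w v ⟨rfl, hw⟩ hr
    rcases hr with ⟨t, t', rfl, rfl, -⟩ | ⟨rfl, -⟩
    · exact ⟨none, Or.inr ⟨rfl, rfl⟩, rfl, by simp⟩
    · exact absurd rfl hw
  · constructor
    · rintro s' s ⟨rfl, -⟩ w _; trivial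
    · intro s hp
      have hs : s = none := by
        cases s with
        | none => rfl
        | some t => exact absurd ⟨none, rfl, by simp⟩ hp
      subst hs
      refine ⟨hp, fun w => trivial, fun a t => ⟨?_, ?_⟩⟩
      · constructor
        · rintro (⟨u, u', h, -⟩ | ⟨-, rfl⟩)
          · simp at h
          · rfl
        · rintro rfl; exact Or.inr ⟨rfl, rfl⟩
      · constructor
        · rintro (⟨u, u', -, h, -⟩ | ⟨rfl, -⟩)
          · simp at h
          · rfl
        · rintro rfl; exact Or.inr ⟨rfl, rfl⟩
end

section
/- Every restricted Kripke model is synchronous: if M satisfies depth-definedness, knowledge of the past, knowledge of the initial time, uniqueness of the past, and perfect recall, then w →_a v implies depth(w) = depth(v) for all agents a and worlds w, v. -/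
lemma chain_fwd {Agt W : Type} {r : Agt → W → W → Prop} {y : W → W → Prop}
    (hpr : PerfRecall r y) :
    ∀ n a w v, r a w v → hasChain y n w → hasChain y n v := by
  intro n
  induction n with
  | zero => intro _ _ _ _ _; trivial
  | succ n ih =>
    rintro a w v hwv ⟨w1, hw1, hc⟩
    obtain ⟨v1, hrv1, hyv1⟩ := hpr a w1 w v hw1 hwv
    exact ⟨v1, hyv1, ih a w1 v1 hrv1 hc⟩

lemma chain_bwd {Agt W : Type} {r : Agt → W → W → Prop} {y : W → W → Prop}
    (hki : KnowInit r y) (hup : UniqPast y) (hpr : PerfRecall r y) :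
    ∀ n a w v, r a w v → hasChain y n v → hasChain y n w := by
  intro n
  induction n with
  | zero => intro _ _ _ _ _; trivial
  | succ n ih =>
    rintro a w v hwv ⟨v1, hv1, hc⟩
    by_cases hps : pastState y w
    · exact absurd ⟨v1, hv1⟩ (hki a w v hwv hps)
    · simp only [pastState, not_not] at hps
      obtain ⟨w1, hw1⟩ := hps
      obtain ⟨v1', hrv1, hyv1⟩ := hpr a w1 w v hw1 hwv
      have : v1' = v1 := hup v1' v1 v hyv1 hv1
      subst this
      exact ⟨w1, hw1, ih a w1 v1' hrv1 hc⟩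

theorem stmt18 {Agt Prp W : Type} (M : KModel Agt Prp W)
    (hdd : DepthDef M.yest) (hkp : KnowPast M.rel M.yest)
    (hki : KnowInit M.rel M.yest) (hup : UniqPast M.yest)
    (hpr : PerfRecall M.rel M.yest) :
    ∀ (a : Agt) (w v : W), M.rel a w v → depth M.yest w = depth M.yest v := by
  intro a w v hwv
  unfold depth
  congr 1
  ext n
  simp only [Set.mem_image, Set.mem_setOf_eq]
  constructor
  · rintro ⟨m, hm, rfl⟩
    exact ⟨m, chain_fwd hpr m a w v hwv hm, rfl⟩
  · rintro ⟨m, hm, rfl⟩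
    exact ⟨m, chain_bwd hki hup hpr m a w v hwv hm, rfl⟩
end
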